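/- arXiv:2002.02579 — 2 statements merged into one kernel-verified Lean document; each statement's English description precedes it below -/
import Mathlib

section
/- With η and the Bayes rule f* defined as in the preceding context, for any measurable decision rule f the excess risk satisfies R_upper(f) − R_upper(f*) = E[ 1{sgn(f(X)) ≠ sgn(f*(X))} · |η(X)| ]. -/
open MeasureTheory
open scoped Classical

/-- sgn(t) = 1 if t > 0 and -1 otherwise. -/
noncomputable def sgnR (t : ℝ) : ℝ := if 0 < t then 1 else -1

/-- real-valued indicator of a proposition -/
noncomputable def indF (P : Prop) : ℝ := if P then 1 else 0

/-- worst-case weighted misclassification loss -/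
noncomputable def Wloss (L U f : ℝ) : ℝ :=
  ⨆ c : Set.Icc L U, |c.1| * indF (sgnR f ≠ sgnR c.1)

/-- η(L,U) = |U|·1{L>0} − |L|·1{U<0} + (|U|−|L|)·1{L ≤ 0 ≤ U} -/
noncomputable def etaF (L U : ℝ) : ℝ :=
  |U| * indF (0 < L) - |L| * indF (U < 0) + (|U| - |L|) * indF (L ≤ 0 ∧ 0 ≤ U)

lemma wloss_eq (L U f : ℝ) (h : L ≤ U) :
    Wloss L U f = if 0 < f then max (-L) 0 else max U 0 := by
  have hne : Nonempty (Set.Icc L U) := ⟨⟨L, le_refl _, h⟩⟩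
  have hbdd : BddAbove (Set.range fun c : Set.Icc L U => |c.1| * indF (sgnR f ≠ sgnR c.1)) := by
    refine ⟨max |L| |U|, ?_⟩
    rintro y ⟨⟨c, hc1, hc2⟩, rfl⟩
    simp only [indF]
    split
    · rw [mul_one]
      rcases le_or_gt c 0 with hc | hc
      · calc |c| = -c := abs_of_nonpos hc
          _ ≤ -L := by linarith
          _ ≤ |L| := by rw [abs_eq_max_neg]; exact le_max_right _ _
          _ ≤ _ := le_max_left _ _
      · calc |c| = c := abs_of_pos hc
          _ ≤ U := hc2
          _ ≤ |U| := le_abs_self _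
          _ ≤ _ := le_max_right _ _
    · rw [mul_zero]; positivity
  by_cases hf : 0 < f
  · rw [if_pos hf]
    apply le_antisymm
    · apply ciSup_le
      rintro ⟨c, hc1, hc2⟩
      simp only [sgnR, indF, if_pos hf]
      rcases lt_or_ge 0 c with hc | hc
      · simp [hc]
      · rw [if_neg (not_lt.2 hc), if_pos (by norm_num), mul_one, abs_of_nonpos hc]
        exact le_max_of_le_left (by linarith)
    · rcases le_or_gt L 0 with hL | hL
      · rw [max_eq_left (by linarith)]
        refine le_ciSup_of_le hbdd ⟨L, le_refl _, h⟩ ?_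
        simp only [sgnR, indF, if_pos hf, if_neg (not_lt.2 hL)]
        rw [if_pos (by norm_num), mul_one, abs_of_nonpos hL]
      · rw [max_eq_right (by linarith)]
        refine le_ciSup_of_le hbdd ⟨L, le_refl _, h⟩ ?_
        exact mul_nonneg (abs_nonneg _) (by unfold indF; split <;> norm_num)
  · rw [if_neg hf]
    apply le_antisymm
    · apply ciSup_le
      rintro ⟨c, hc1, hc2⟩
      simp only [sgnR, indF, if_neg hf]
      rcases lt_or_ge 0 c with hc | hc
      · rw [if_pos hc, if_pos (by norm_num), mul_one, abs_of_pos hc]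
        exact le_max_of_le_left hc2
      · simp [not_lt.2 hc]
    · rcases lt_or_ge 0 U with hU | hU
      · rw [max_eq_left hU.le]
        refine le_ciSup_of_le hbdd ⟨U, h, le_refl _⟩ ?_
        simp only [sgnR, indF, if_neg hf, if_pos hU]
        rw [if_pos (by norm_num), mul_one, abs_of_pos hU]
      · rw [max_eq_right hU]
        refine le_ciSup_of_le hbdd ⟨L, le_refl _, h⟩ ?_
        exact mul_nonneg (abs_nonneg _) (by unfold indF; split <;> norm_num)

lemma eta_pos (L U : ℝ) (h : L ≤ U) (hL : 0 < L) : etaF L U = U := by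
  have hU : 0 < U := lt_of_lt_of_le hL h
  simp [etaF, indF, hL, not_lt.2 hU.le, not_le.2 hL, abs_of_pos hU]

lemma eta_neg (L U : ℝ) (h : L ≤ U) (hU : U < 0) : etaF L U = L := by
  have hL : L < 0 := lt_of_le_of_lt h hU
  simp [etaF, indF, hU, not_lt.2 hL.le, not_le.2 hU, abs_of_neg hL]

lemma eta_mid (L U : ℝ) (hL : L ≤ 0) (hU : 0 ≤ U) : etaF L U = U + L := by
  simp [etaF, indF, not_lt.2 hL, not_lt.2 hU, hL, hU, abs_of_nonneg hU, abs_of_nonpos hL]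

lemma eta_abs_le (L U : ℝ) (h : L ≤ U) : |etaF L U| ≤ |L| + |U| := by
  rcases lt_or_ge 0 L with hL | hL
  · rw [eta_pos L U h hL]
    nlinarith [abs_nonneg L, le_abs_self U]
  · rcases lt_or_ge U 0 with hU | hU
    · rw [eta_neg L U h hU]
      nlinarith [abs_nonneg U, le_abs_self L]
    · rw [eta_mid L U hL hU, abs_of_nonpos hL, abs_of_nonneg hU]
      rw [abs_le]; constructor <;> linarith

lemma key (L U f fs : ℝ) (h : L ≤ U)
    (hs : sgnR fs = if 0 ≤ etaF L U then (1:ℝ) else -1) :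
    Wloss L U f = Wloss L U fs + indF (sgnR f ≠ sgnR fs) * |etaF L U| := by
  have hfs : (0 < fs) ↔ (0 ≤ etaF L U) := by
    unfold sgnR at hs
    constructor
    · intro h1
      by_contra h2
      rw [if_pos h1, if_neg h2] at hs; norm_num at hs
    · intro h2
      by_contra h1
      rw [if_neg h1, if_pos h2] at hs; norm_num at hs
  rw [wloss_eq L U f h, wloss_eq L U fs h]
  rcases lt_or_ge 0 L with hL | hL
  · have hU : 0 < U := lt_of_lt_of_le hL h
    rw [eta_pos L U h hL] at hfs ⊢
    have hfsp : 0 < fs := hfs.2 hU.le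
    by_cases hf : 0 < f
    · simp only [if_pos hf, if_pos hfsp, indF, sgnR]
      rw [if_neg]; · ring
      simp [hf, hfsp]
    · simp only [if_neg hf, if_pos hfsp, indF, sgnR]
      rw [if_pos (by simp [hf, hfsp]; norm_num), abs_of_pos hU,
        max_eq_left hU.le, max_eq_right (by linarith : -L ≤ 0)]
      ring
  · rcases lt_or_ge U 0 with hU | hU
    · have hL' : L < 0 := lt_of_le_of_lt h hU
      rw [eta_neg L U h hU] at hfs ⊢
      have hfsn : ¬ 0 < fs := fun hp => absurd (hfs.1 hp) (not_le.2 hL')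
      by_cases hf : 0 < f
      · simp only [if_pos hf, if_neg hfsn, indF, sgnR]
        rw [if_pos (by simp [hf, hfsn]; norm_num), abs_of_neg hL',
          max_eq_left (by linarith : (0:ℝ) ≤ -L), max_eq_right hU.le]
        ring
      · simp only [if_neg hf, if_neg hfsn, indF, sgnR]
        rw [if_neg]; · ring
        simp [hf, hfsn]
    · rw [eta_mid L U hL hU] at hfs ⊢
      rcases le_or_gt 0 (U + L) with he | he
      · have hfsp : 0 < fs := hfs.2 he
        by_cases hf : 0 < f
        · simp only [if_pos hf, if_pos hfsp, indF, sgnR]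
          rw [if_neg]; · ring
          simp [hf, hfsp]
        · simp only [if_neg hf, if_pos hfsp, indF, sgnR]
          rw [if_pos (by simp [hf, hfsp]; norm_num), abs_of_nonneg he,
            max_eq_left hU, max_eq_left (by linarith : (0:ℝ) ≤ -L)]
          ring
      · have hfsn : ¬ 0 < fs := fun hp => absurd (hfs.1 hp) (not_le.2 he)
        by_cases hf : 0 < f
        · simp only [if_pos hf, if_neg hfsn, indF, sgnR]
          rw [if_pos (by simp [hf, hfsn]; norm_num), abs_of_neg he,
            max_eq_left hU, max_eq_left (by linarith : (0:ℝ) ≤ -L)]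
          ring
        · simp only [if_neg hf, if_neg hfsn, indF, sgnR]
          rw [if_neg]; · ring
          simp [hf, hfsn]

/-- excess-risk representation:
R_upper(f) − R_upper(f*) = E[ 1{sgn f(X) ≠ sgn f*(X)} · |η(X)| ]. -/
theorem stmt5 {𝒳 : Type*} [MeasurableSpace 𝒳] (μ : Measure 𝒳) [IsProbabilityMeasure μ]
    (L U : 𝒳 → ℝ) (hLm : Measurable L) (hUm : Measurable U) (hLU : ∀ x, L x ≤ U x)
    (M : ℝ) (hbdd : ∀ x, |L x| ≤ M ∧ |U x| ≤ M)
    (fstar : 𝒳 → ℝ) (hfm : Measurable fstar)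
    (hstar : ∀ x, sgnR (fstar x) = if 0 ≤ etaF (L x) (U x) then (1 : ℝ) else -1)
    (f : 𝒳 → ℝ) (hf : Measurable f) :
    ∫ x, Wloss (L x) (U x) (f x) ∂μ - ∫ x, Wloss (L x) (U x) (fstar x) ∂μ =
      ∫ x, indF (sgnR (f x) ≠ sgnR (fstar x)) * |etaF (L x) (U x)| ∂μ := by
  have heq : ∀ x, Wloss (L x) (U x) (f x) =
      Wloss (L x) (U x) (fstar x) + indF (sgnR (f x) ≠ sgnR (fstar x)) * |etaF (L x) (U x)| :=
    fun x => key _ _ _ _ (hLU x) (hstar x)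
  have hmWs : Measurable fun x => Wloss (L x) (U x) (fstar x) := by
    have h1 : (fun x => Wloss (L x) (U x) (fstar x)) =
        fun x => if 0 < fstar x then max (-(L x)) 0 else max (U x) 0 :=
      funext fun x => wloss_eq _ _ _ (hLU x)
    rw [h1]
    exact Measurable.ite (measurableSet_lt measurable_const hfm)
      (hLm.neg.max measurable_const) (hUm.max measurable_const)
  have hmeta : Measurable fun x => etaF (L x) (U x) := by
    have h1 : (fun x => etaF (L x) (U x)) = fun x =>
        |U x| * (if 0 < L x then (1:ℝ) else 0) - |L x| * (if U x < 0 then (1:ℝ) else 0)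
          + (|U x| - |L x|) * (if L x ≤ 0 ∧ 0 ≤ U x then (1:ℝ) else 0) := by
      funext x; simp [etaF, indF]
    rw [h1]
    refine ((hUm.abs.mul ?_).sub (hLm.abs.mul ?_)).add ((hUm.abs.sub hLm.abs).mul ?_)
    · exact Measurable.ite (measurableSet_lt measurable_const hLm) measurable_const
        measurable_const
    · exact Measurable.ite (measurableSet_lt hUm measurable_const) measurable_const
        measurable_const
    · exact Measurable.ite ((measurableSet_le hLm measurable_const).inter
        (measurableSet_le measurable_const hUm)) measurable_const measurable_const
  have hmg : Measurable fun x => indF (sgnR (f x) ≠ sgnR (fstar x)) * |etaF (L x) (U x)| := by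
    refine Measurable.mul ?_ hmeta.abs
    have hsf : Measurable fun x => sgnR (f x) :=
      Measurable.ite (measurableSet_lt measurable_const hf) measurable_const measurable_const
    have hss : Measurable fun x => sgnR (fstar x) :=
      Measurable.ite (measurableSet_lt measurable_const hfm) measurable_const measurable_const
    have h1 : (fun x => indF (sgnR (f x) ≠ sgnR (fstar x))) =
        fun x => if sgnR (f x) ≠ sgnR (fstar x) then (1:ℝ) else 0 := by
      funext x; simp [indF]
    rw [h1]
    exact Measurable.ite ((measurableSet_eq_fun hsf hss).compl) measurable_const
      measurable_const
  have hiWs : Integrable (fun x => Wloss (L x) (U x) (fstar x)) μ := by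
    refine Integrable.mono' (integrable_const M) hmWs.aestronglyMeasurable
      (ae_of_all _ fun x => ?_)
    obtain ⟨hbL, hbU⟩ := hbdd x
    have hM0 : 0 ≤ M := le_trans (abs_nonneg _) hbL
    rw [wloss_eq _ _ _ (hLU x)]
    split
    · rw [Real.norm_eq_abs, abs_of_nonneg (le_max_right _ _)]
      refine max_le (le_trans (neg_le_abs _) hbL) hM0
    · rw [Real.norm_eq_abs, abs_of_nonneg (le_max_right _ _)]
      refine max_le (le_trans (le_abs_self _) hbU) hM0
  have hig : Integrable
      (fun x => indF (sgnR (f x) ≠ sgnR (fstar x)) * |etaF (L x) (U x)|) μ := by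
    refine Integrable.mono' (integrable_const (M + M)) hmg.aestronglyMeasurable
      (ae_of_all _ fun x => ?_)
    obtain ⟨hbL, hbU⟩ := hbdd x
    have h1 : |etaF (L x) (U x)| ≤ |L x| + |U x| := eta_abs_le _ _ (hLU x)
    have h2 : (0:ℝ) ≤ indF (sgnR (f x) ≠ sgnR (fstar x)) ∧
        indF (sgnR (f x) ≠ sgnR (fstar x)) ≤ 1 := by
      unfold indF; split <;> norm_num
    rw [Real.norm_eq_abs, abs_of_nonneg (mul_nonneg h2.1 (abs_nonneg _))]
    calc indF (sgnR (f x) ≠ sgnR (fstar x)) * |etaF (L x) (U x)|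
        ≤ 1 * |etaF (L x) (U x)| :=
          mul_le_mul_of_nonneg_right h2.2 (abs_nonneg _)
      _ = |etaF (L x) (U x)| := one_mul _
      _ ≤ |L x| + |U x| := h1
      _ ≤ M + M := add_le_add hbL hbU
  have hsum : ∫ x, Wloss (L x) (U x) (f x) ∂μ =
      ∫ x, Wloss (L x) (U x) (fstar x) ∂μ +
        ∫ x, indF (sgnR (f x) ≠ sgnR (fstar x)) * |etaF (L x) (U x)| ∂μ := by
    rw [← integral_add hiWs hig]
    exact integral_congr_ae (ae_of_all _ heq)
  rw [hsum]; ring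
end

section
/- Let f* be the Bayes rule for R_upper, i.e., sgn(f*(x)) = sgn(U(x)+L(x)) with the convention +1 when U(x)+L(x) ≥ 0. Suppose L(x) ≤ C(x) ≤ U(x). Then pointwise, |C(x)|·1{sgn(C(x)) ≠ sgn(f*(x))} ≤ 1{L(x) < 0 < U(x)} · (U(x) − L(x)) · (1 − ρ(x))/2 · 1{ρᶜ(x) > ρ(x)}, where ρ(x) = |U(x)+L(x)| / (U(x)−L(x)) and ρᶜ(x) = |C(x) − (U(x)+L(x))/2| / ((U(x)−L(x))/2). -/
open scoped Classical

lemma indF_nonneg (P : Prop) : 0 ≤ indF P := by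
  unfold indF; split <;> norm_num

/-- pointwise risk bound for the Bayes rule f* (whose sign is +1
iff η ≥ 0): with ρ = |U+L|/(U−L) and ρᶜ = |C − (U+L)/2|/((U−L)/2),
|C|·1{sgn C ≠ sgn f*} ≤ 1{L<0<U}·(U−L)·(1−ρ)/2·1{ρᶜ > ρ}. -/
theorem stmt8 (L C U : ℝ) (h1 : L ≤ C) (h2 : C ≤ U) (h3 : L < U) :
    |C| * indF (sgnR C ≠ (if 0 ≤ etaF L U then (1 : ℝ) else -1)) ≤
      indF (L < 0 ∧ 0 < U) * (U - L) * ((1 - |U + L| / (U - L)) / 2) *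
        indF (|C - (U + L) / 2| / ((U - L) / 2) > |U + L| / (U - L)) := by
  have hUL : (0:ℝ) < U - L := by linarith
  have hne : U - L ≠ 0 := hUL.ne'
  have h2' : (0:ℝ) < (U - L) / 2 := by linarith
  have hkey : (|C - (U + L) / 2| / ((U - L) / 2) > |U + L| / (U - L)) ↔
      |U + L| / 2 < |C - (U + L) / 2| := by
    rw [gt_iff_lt, show |U + L| / (U - L) = |U + L| / 2 / ((U - L) / 2) by
      field_simp]
    exact div_lt_div_iff_of_pos_right h2'
  have hval : (U - L) * ((1 - |U + L| / (U - L)) / 2) = (U - L - |U + L|) / 2 := by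
    field_simp
  rcases lt_trichotomy 0 L with hL | hL | hL
  · -- 0 < L : no mismatch, RHS = 0
    have hC : 0 < C := lt_of_lt_of_le hL h1
    have hU : 0 < U := lt_trans hL h3
    have hA : ¬ (L ≤ 0 ∧ 0 ≤ U) := fun h => absurd hL (not_lt.2 h.1)
    have heta : etaF L U = |U| := by
      simp [etaF, indF, hL, hU.not_gt, hA]
    simp [indF, sgnR, hC, heta, abs_nonneg, hL.not_gt]
  · -- L = 0
    subst hL
    have hU : 0 < U := h3
    have heta : etaF 0 U = U := by
      simp [etaF, indF, hU.le, abs_of_nonneg hU.le]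
    have hrhs0 : indF ((0:ℝ) < 0 ∧ 0 < U) = 0 := by simp [indF]
    rw [heta, if_pos hU.le, hrhs0, zero_mul, zero_mul, zero_mul]
    rcases eq_or_lt_of_le h1 with hC0 | hC
    · simp [← hC0]
    · have hsg : sgnR C = 1 := if_pos hC
      simp [indF, hsg]
  · -- L < 0
    rcases lt_trichotomy 0 U with hU | hU | hU
    · -- L < 0 < U : main case
      have heta : etaF L U = U + L := by
        simp [etaF, indF, hL.not_gt, hU.not_gt, hL.le, hU.le, abs_of_nonneg hU.le,
          abs_of_neg hL]
      have hind1 : indF (L < 0 ∧ 0 < U) = 1 := by simp [indF, hL, hU]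
      have hbound : |U + L| ≤ U - L := abs_le.2 ⟨by linarith, by linarith⟩
      rw [heta, hind1, one_mul, hval]
      rcases le_or_gt 0 (U + L) with hS | hS
      · -- f* = 1
        rw [if_pos hS]
        have habs : |U + L| = U + L := abs_of_nonneg hS
        by_cases hC : 0 < C
        · -- no mismatch
          have hz : indF (sgnR C ≠ (1:ℝ)) = 0 := by
            rw [sgnR, if_pos hC]; simp [indF]
          rw [hz, mul_zero]
          exact mul_nonneg (by linarith) (indF_nonneg _)
        · rcases eq_or_lt_of_le (not_lt.1 hC) with hC0 | hC0
          · rw [hC0, abs_zero, zero_mul]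
            exact mul_nonneg (by linarith) (indF_nonneg _)
          · -- C < 0 : mismatch, indicator 1
            have hmis : sgnR C ≠ (1:ℝ) := by rw [sgnR, if_neg hC]; norm_num
            have hrc : |U + L| / 2 < |C - (U + L) / 2| := by
              rw [habs, abs_of_neg (by linarith : C - (U + L) / 2 < 0)]
              linarith
            rw [indF, if_pos hmis, indF, if_pos (hkey.2 hrc), mul_one, mul_one,
              abs_of_neg hC0, habs]
            linarith
      · -- U + L < 0 : f* = -1
        rw [if_neg (not_le.2 hS)]
        have habs : |U + L| = -(U + L) := abs_of_neg hS
        by_cases hC : 0 < C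
        · -- mismatch
          have hmis : sgnR C ≠ (-1:ℝ) := by rw [sgnR, if_pos hC]; norm_num
          have hrc : |U + L| / 2 < |C - (U + L) / 2| := by
            rw [habs, abs_of_pos (by linarith : 0 < C - (U + L) / 2)]
            linarith
          rw [indF, if_pos hmis, indF, if_pos (hkey.2 hrc), mul_one, mul_one,
            abs_of_pos hC, habs]
          linarith
        · -- no mismatch
          have hz : indF (sgnR C ≠ (-1:ℝ)) = 0 := by
            rw [sgnR, if_neg hC]; simp [indF]
          rw [hz, mul_zero]
          exact mul_nonneg (by linarith) (indF_nonneg _)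
    · -- U = 0
      subst hU
      have heta : etaF L 0 = -|L| := by
        simp [etaF, indF, hL.le, hL.not_gt]
      have hnn : ¬ (0 ≤ etaF L 0) := by
        rw [heta, abs_of_neg hL]; push_neg; linarith
      rw [if_neg hnn]
      have hC : ¬ 0 < C := not_lt.2 h2
      simp [sgnR, hC, indF]
    · -- U < 0
      have hC : ¬ 0 < C := not_lt.2 (h2.trans hU.le)
      have hB : ¬ (L ≤ 0 ∧ 0 ≤ U) := fun h => absurd h.2 (not_le.2 hU)
      have heta : etaF L U = -|L| := by
        simp [etaF, indF, hL.not_gt, hU, hB]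
      have hnn : ¬ (0 ≤ etaF L U) := by
        rw [heta, abs_of_neg hL]; push_neg; linarith
      rw [if_neg hnn]
      simp [sgnR, hC, indF, hU.not_gt]
end
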